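/- arXiv:1411.3791 — 2 statements merged into one kernel-verified Lean document; each statement's English description precedes it below -/
import Mathlib

section
/- The subcontract relation ⪯ over output persistent contracts is an independent subcontract preorder: for any n ≥ 1, output persistent contracts C_1,…,C_n and C'_1,…,C'_n with C'_i ⪯ C_i for all i, and distinct roles l_1,…,l_n with l_i ∉ oroles(C_i) ∪ oroles(C'_i), if ([C_1]_{l_1} || … || [C_n]_{l_n})↓ then ([C'_1]_{l_1} || … || [C'_n]_{l_n})↓. -/
/-!
Formalization of choreographies, orchestrations and behavioural contracts
following Bravetti–Zavattaro, "Choreographies and Behavioural Contracts on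
the Way to Dynamic Updates".
-/

/-- Action names (a denumerable set). -/
abbrev AName := ℕ
/-- Roles. -/
abbrev Role := ℕ

/-! ### The choreography calculus -/

/-- Choreographies, including the auxiliary terms `one` (successful completion)
and `zero` (halt). -/
inductive Chor : Type
  | comm : AName → Role → Role → Chor      -- a_{r→s}
  | choice : Chor → Chor → Chor
  | seq : Chor → Chor → Chor
  | par : Chor → Chor → Chor
  | star : Chor → Chor
  | one : Chor
  | zero : Chor
  deriving DecidableEq

/-- Labels of the choreography semantics: interactions `a_{r→s}` and `√`. -/
inductive CLabel : Type
  | comm : AName → Role → Role → CLabel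
  | tick : CLabel
  deriving DecidableEq

/-- Operational semantics of choreographies. -/
inductive CStep : Chor → CLabel → Chor → Prop
  | comm : CStep (.comm a r s) (.comm a r s) .one
  | one : CStep .one .tick .zero
  | starTick : CStep (.star H) .tick .zero
  | choiceL : CStep H η H' → CStep (.choice H L) η H'
  | choiceR : CStep L η L' → CStep (.choice H L) η L'
  | seqL : CStep H η H' → η ≠ .tick → CStep (.seq H L) η (.seq H' L)
  | seqTick : CStep H .tick H' → CStep L η L' → CStep (.seq H L) η L'
  | parL : CStep H η H' → η ≠ .tick → CStep (.par H L) η (.par H' L)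
  | parR : CStep L η L' → η ≠ .tick → CStep (.par H L) η (.par H L')
  | parTick : CStep H .tick H' → CStep L .tick L' → CStep (.par H L) .tick (.par H' L')
  | starStep : CStep H η H' → η ≠ .tick → CStep (.star H) η (.seq H' (.star H))

/-- Roles syntactically occurring in a choreography. -/
def rolesC : Chor → Finset Role
  | .comm _ r s => {r, s}
  | .choice H L | .seq H L | .par H L => rolesC H ∪ rolesC L
  | .star H => rolesC H
  | .one | .zero => ∅

/-- Action names syntactically occurring in a choreography. -/
def namesC : Chor → Finset AName
  | .comm a _ _ => {a}
  | .choice H L | .seq H L | .par H L => namesC H ∪ namesC L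
  | .star H => namesC H
  | .one | .zero => ∅

/-! ### The orchestration calculus -/

/-- Orchestrations (also used as behavioural contract terms). -/
inductive Orc : Type
  | zero : Orc
  | one : Orc
  | tau : Orc
  | inp : AName → Orc              -- receive a
  | out : AName → Role → Orc       -- invoke ā directed to role l
  | seq : Orc → Orc → Orc
  | choice : Orc → Orc → Orc
  | par : Orc → Orc → Orc
  | star : Orc → Orc
  deriving DecidableEq

/-- Labels of the orchestration/contract semantics. -/
inductive OLabel : Type
  | tau : OLabel
  | inp : AName → OLabel
  | out : AName → Role → OLabel
  | tick : OLabel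
  deriving DecidableEq

/-- Operational semantics of orchestrations/contracts. -/
inductive OStep : Orc → OLabel → Orc → Prop
  | one : OStep .one .tick .zero
  | tau : OStep .tau .tau .one
  | inp : OStep (.inp a) (.inp a) .one
  | out : OStep (.out a l) (.out a l) .one
  | choiceL : OStep C μ C' → OStep (.choice C D) μ C'
  | choiceR : OStep D μ D' → OStep (.choice C D) μ D'
  | seqL : OStep C μ C' → μ ≠ .tick → OStep (.seq C D) μ (.seq C' D)
  | seqTick : OStep C .tick C' → OStep D μ D' → OStep (.seq C D) μ D'
  | parL : OStep C μ C' → μ ≠ .tick → OStep (.par C D) μ (.par C' D)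
  | parR : OStep D μ D' → μ ≠ .tick → OStep (.par C D) μ (.par C D')
  | parTick : OStep C .tick C' → OStep D .tick D' → OStep (.par C D) .tick (.par C' D')
  | starTick : OStep (.star C) .tick .zero
  | starStep : OStep C μ C' → μ ≠ .tick → OStep (.star C) μ (.seq C' (.star C))

/-! ### Systems (compositions of located orchestrations/contracts) -/

/-- Systems: parallel compositions of located orchestrations `[C]_l`. -/
inductive Sys : Type
  | atom : Orc → Role → Sys
  | par : Sys → Sys → Sys
  deriving DecidableEq

/-- Labels of the system semantics. -/
inductive SLabel : Type
  | tau : SLabel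
  | inp : AName → Role → SLabel            -- a_s
  | out : AName → Role → Role → SLabel     -- ā_{r s}
  | comm : AName → Role → Role → SLabel    -- a_{r→s}
  | tick : SLabel
  deriving DecidableEq

/-- Operational semantics of systems. -/
inductive SStep : Sys → SLabel → Sys → Prop
  | atomTau : OStep C .tau C' → SStep (.atom C r) .tau (.atom C' r)
  | atomInp : OStep C (.inp a) C' → SStep (.atom C r) (.inp a r) (.atom C' r)
  | atomOut : OStep C (.out a s) C' → SStep (.atom C r) (.out a r s) (.atom C' r)
  | atomTick : OStep C .tick C' → SStep (.atom C r) .tick (.atom C' r)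
  | parL : SStep P μ P' → μ ≠ .tick → SStep (.par P Q) μ (.par P' Q)
  | parR : SStep Q μ Q' → μ ≠ .tick → SStep (.par P Q) μ (.par P Q')
  | commLR : SStep P (.out a r s) P' → SStep Q (.inp a s) Q' →
      SStep (.par P Q) (.comm a r s) (.par P' Q')
  | commRL : SStep P (.inp a s) P' → SStep Q (.out a r s) Q' →
      SStep (.par P Q) (.comm a r s) (.par P' Q')
  | parTick : SStep P .tick P' → SStep Q .tick Q' → SStep (.par P Q) .tick (.par P' Q')

/-- One step of a completely specified system: an internal `τ` step or a
completed interaction `a_{r→s}`. -/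
def CompleteStep (P P' : Sys) : Prop :=
  SStep P .tau P' ∨ ∃ a r s, SStep P (.comm a r s) P'

/-- Reachability through complete (τ / completed-interaction) steps. -/
inductive Reach : Sys → Sys → Prop
  | refl (P) : Reach P P
  | step : CompleteStep P P' → Reach P' P'' → Reach P P''

/-- `P` can perform the successful-termination label `√`. -/
def CanTick (P : Sys) : Prop := ∃ P', SStep P .tick P'

/-- Correct composition `P↓`: every reachable state can reach a state able to
perform `√`. -/
def Correct (P : Sys) : Prop :=
  ∀ P', Reach P P' → ∃ P'', Reach P' P'' ∧ CanTick P''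

/-- `WTrace P w` is the weak transition `P ⇒^{w√}`: `P` performs the sequence
`w` of completed interactions `a_{r→s}` (absorbing `τ` steps) and then `√`. -/
inductive WTrace : Sys → List (AName × Role × Role) → Prop
  | tick : CanTick P → WTrace P []
  | tau : SStep P .tau P' → WTrace P' w → WTrace P w
  | comm : SStep P (.comm a r s) P' → WTrace P' w → WTrace P ((a, r, s) :: w)

/-- `CTrace H w` is the transition sequence `H →^{w√}`. -/
inductive CTrace : Chor → List (AName × Role × Role) → Prop
  | tick : CStep H .tick H' → CTrace H []
  | comm : CStep H (.comm a r s) H' → CTrace H' w → CTrace H ((a, r, s) :: w)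

/-- `P` implements `H` (written `P ∝ H`): `P` is a correct composition and all
its conversations (followed by `√`) are admitted by `H`. -/
def Implements (P : Sys) (H : Chor) : Prop :=
  Correct P ∧ ∀ w, WTrace P w → CTrace H w

/-! ### Projection and well-formedness -/

/-- Projection of a choreography on a role (homomorphic over all operators). -/
def proj : Chor → Role → Orc
  | .comm a r s, t => if t = r then .out a s else if t = s then .inp a else .one
  | .choice H L, t => .choice (proj H t) (proj L t)
  | .seq H L, t => .seq (proj H t) (proj L t)
  | .par H L, t => .par (proj H t) (proj L t)
  | .star H, t => .star (proj H t)
  | .one, _ => .one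
  | .zero, _ => .zero

/-- Parallel composition of a list of located contracts
`[C_1]_{l_1} || … || [C_n]_{l_n}`. -/
def composeC : List (Orc × Role) → Sys
  | [] => .atom .one 0
  | [(C, l)] => .atom C l
  | (C, l) :: x :: xs => .par (.atom C l) (composeC (x :: xs))

/-- Well-formed choreography: the system obtained by projecting `H` on all its
roles implements `H` (for any enumeration of its roles). -/
def WellFormed (H : Chor) : Prop :=
  ∀ L : List Role, L.Nodup → L.toFinset = rolesC H →
    Implements (composeC (L.map fun r => (proj H r, r))) H

/-! ### Behavioural contracts: basic notions -/

/-- Roles targeted by output actions syntactically occurring in a contract. -/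
def oroles : Orc → Finset Role
  | .out _ l => {l}
  | .seq C D | .choice C D | .par C D => oroles C ∪ oroles D
  | .star C => oroles C
  | _ => ∅

/-- Input action names syntactically occurring in a contract: `I(C)`. -/
def inames : Orc → Finset AName
  | .inp a => {a}
  | .seq C D | .choice C D | .par C D => inames C ∪ inames D
  | .star C => inames C
  | _ => ∅

/-- `C \\ M`: replace every input on a name in `M` occurring in `C` by `0`. -/
def restrict (C : Orc) (M : Finset AName) : Orc :=
  match C with
  | .inp a => if a ∈ M then .zero else .inp a
  | .seq C D => .seq (restrict C M) (restrict D M)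
  | .choice C D => .choice (restrict C M) (restrict D M)
  | .par C D => .par (restrict C M) (restrict D M)
  | .star C => .star (restrict C M)
  | C => C

/-- Reachability in the contract LTS (through any labels). -/
inductive OReach : Orc → Orc → Prop
  | refl (C) : OReach C C
  | step : OStep C μ C' → OReach C' C'' → OReach C C''

/-- Output persistence: once a contract decides to execute an output, its
actual execution is mandatory to reach successful termination. -/
def OutputPersistent (C : Orc) : Prop :=
  ∀ C', OReach C C' → ∀ a l, (∃ D, OStep C' (.out a l) D) →
    (¬ ∃ D, OStep C' .tick D) ∧
    (∀ μ C'', OStep C' μ C'' → μ ≠ .out a l → ∃ D, OStep C'' (.out a l) D)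

/-- The list of roles of the located contracts occurring in a system. -/
def rolesList : Sys → List Role
  | .atom _ r => [r]
  | .par P Q => rolesList P ++ rolesList Q

/-- No contract sends outputs to its own role. -/
def NoSelfOut : Sys → Prop
  | .atom C r => r ∉ oroles C
  | .par P Q => NoSelfOut P ∧ NoSelfOut Q

/-- Well-formed system: pairwise distinct roles, no output to one's own role. -/
def WFSys (P : Sys) : Prop := (rolesList P).Nodup ∧ NoSelfOut P

/-- All contracts occurring in the system are output persistent. -/
def AllOP : Sys → Prop
  | .atom C _ => OutputPersistent C
  | .par P Q => AllOP P ∧ AllOP Q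

/-- The subcontract relation `C' ⪯ C` (compliance testing): for every fresh
role `l` and every test composition `P` of output persistent contracts not
using `l`, correctness of `[C]_l || P` implies correctness of `[C']_l || P`. -/
def Subcontract (C' C : Orc) : Prop :=
  ∀ l : Role, l ∉ oroles C ∪ oroles C' →
    ∀ P : Sys, AllOP P → WFSys P → l ∉ rolesList P →
      Correct (.par (.atom C l) P) → Correct (.par (.atom C' l) P)

/-- Independent subcontract pre-order over output persistent contracts:
a pre-order such that refining any number of contracts of a correct system
independently preserves correctness. -/
def IndepSubcontractPre (le : Orc → Orc → Prop) : Prop :=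
  (∀ C, OutputPersistent C → le C C) ∧
  (∀ C₁ C₂ C₃, OutputPersistent C₁ → OutputPersistent C₂ → OutputPersistent C₃ →
      le C₁ C₂ → le C₂ C₃ → le C₁ C₃) ∧
  (∀ L : List (Orc × Orc × Role), L ≠ [] →
    (∀ x ∈ L, OutputPersistent x.1 ∧ OutputPersistent x.2.1 ∧ le x.2.1 x.1) →
    (L.map fun x => x.2.2).Nodup →
    (∀ x ∈ L, x.2.2 ∉ oroles x.1 ∪ oroles x.2.1) →
    Correct (composeC (L.map fun x => (x.1, x.2.2))) →
    Correct (composeC (L.map fun x => (x.2.1, x.2.2))))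

/-- An uncontrollable contract: no test composition can lead it to success. -/
def Uncontrollable (C : Orc) : Prop :=
  ¬ ∃ (l : Role) (P : Sys), l ∉ oroles C ∧ AllOP P ∧ WFSys P ∧ l ∉ rolesList P ∧
      Correct (.par (.atom C l) P)

/-- Weak traces of a contract: sequences of visible labels, absorbing `τ`. -/
inductive WOTrace : Orc → List OLabel → Prop
  | nil (C) : WOTrace C []
  | tau : OStep C .tau C' → WOTrace C' w → WOTrace C w
  | vis : OStep C μ C' → μ ≠ .tau → WOTrace C' w → WOTrace C (μ :: w)

/-! ### Should-testing (fair testing) à la Rensink–Vogler -/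

/-- Labels of tests: internal moves, synchronization with a (visible) action of
the tested contract (`√` included as any other action), and test success `√'`. -/
inductive TLab : Type
  | tau : TLab
  | sync : OLabel → TLab
  | succ : TLab

/-- A test: a labelled transition system over `TLab`. -/
structure TestLTS where
  S : Type
  step : S → TLab → S → Prop
  init : S

/-- Steps of a contract/test configuration. -/
inductive TCStep (T : TestLTS) : (Orc × T.S) → (Orc × T.S) → Prop
  | ctau : OStep C .tau C' → TCStep T (C, t) (C', t)
  | ttau : T.step t .tau t' → TCStep T (C, t) (C, t')
  | sync : OStep C μ C' → μ ≠ OLabel.tau → T.step t (.sync μ) t' → TCStep T (C, t) (C', t')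

/-- Reachability of configurations. -/
inductive TCReach (T : TestLTS) : (Orc × T.S) → (Orc × T.S) → Prop
  | refl (c) : TCReach T c c
  | step : TCStep T c c' → TCReach T c' c'' → TCReach T c c''

/-- `C` should-passes `T`: from every reachable configuration a configuration
in which the test can perform the success action is reachable. -/
def Shd (C : Orc) (T : TestLTS) : Prop :=
  ∀ c, TCReach T (C, T.init) c → ∃ c', TCReach T c c' ∧ ∃ t', T.step c'.2 .succ t'

/-- The should-testing (fair testing) pre-order: `ShouldPre C' C` holds iff
every test that `C` should-passes is also should-passed by `C'`. -/
def ShouldPre (C' C : Orc) : Prop := ∀ T : TestLTS, Shd C T → Shd C' T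

/-- The normal form `NF(C)`: the recursive-equations presentation of the LTS of
`C`.  Since contracts are here represented directly by LTS-denoting terms and
the should-testing pre-order only depends on the underlying LTS, the normal
form is the term itself. -/
def NF (C : Orc) : Orc := C

/-!
Refining one component `[C]_l` of a correct composition is exactly the situation the
definition of `C' ⪯ C` tests, once that component is brought to the front: the remaining
components form an admissible test, and correctness is invariant under rearranging `||`
(a strong bisimulation). Applying this to one component at a time gives independence.
A single component is tested against the inert partner `[1]_r`. Transitivity needs a
role fresh for `C₂` as well: correctness and output persistence are invariant under
permutations of roles, so a test at `l` can be moved to a fresh role `l'` by the swap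
`(l l')`, which fixes `C₁` and `C₃`.
-/

theorem Reach.exists_of_simulation {R : Sys → Sys → Prop}
    (hsim : ∀ P Q P', R P Q → CompleteStep P P' → ∃ Q', CompleteStep Q Q' ∧ R P' Q')
    {P P' Q : Sys} (h : Reach P P') (hR : R P Q) : ∃ Q', Reach Q Q' ∧ R P' Q' := by
  induction h generalizing Q with
  | refl P => exact ⟨Q, .refl Q, hR⟩
  | step hstep _ ih =>
    obtain ⟨Q₁, hQ₁, hR₁⟩ := hsim _ _ _ hR hstep
    obtain ⟨Q', hQ', hR'⟩ := ih hR₁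
    exact ⟨Q', .step hQ₁ hQ', hR'⟩

theorem Correct.of_bisimulation {R : Sys → Sys → Prop}
    (hfwd : ∀ P Q P', R P Q → CompleteStep P P' → ∃ Q', CompleteStep Q Q' ∧ R P' Q')
    (hbwd : ∀ P Q Q', R P Q → CompleteStep Q Q' → ∃ P', CompleteStep P P' ∧ R P' Q')
    (htick : ∀ P Q, R P Q → CanTick P → CanTick Q)
    {P Q : Sys} (hR : R P Q) (hc : Correct P) : Correct Q := by
  intro Q' hQ'
  obtain ⟨P', hP', hR'⟩ :=
    Reach.exists_of_simulation (R := flip R) (fun Q P Q' h hs => hbwd P Q Q' h hs) hQ' hR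
  obtain ⟨P'', hP'', htickP⟩ := hc P' hP'
  obtain ⟨Q'', hQ'', hR''⟩ := Reach.exists_of_simulation hfwd hP'' hR'
  exact ⟨Q'', hQ'', htick _ _ hR'' htickP⟩

inductive StructCongr : Sys → Sys → Prop
  | refl (P) : StructCongr P P
  | trans : StructCongr P Q → StructCongr Q R → StructCongr P R
  | parCong : StructCongr P P' → StructCongr Q Q' → StructCongr (.par P Q) (.par P' Q')
  | swap : StructCongr (.par P Q) (.par Q P)
  | assoc : StructCongr (.par (.par P Q) R) (.par P (.par Q R))

namespace StructCongr

theorem assoc_symm {P Q R : Sys} : StructCongr (.par P (.par Q R)) (.par (.par P Q) R) :=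
  swap.trans <| assoc.trans <| swap.trans <| assoc.trans swap

theorem symm {P Q : Sys} (h : StructCongr P Q) : StructCongr Q P := by
  induction h with
  | refl P => exact refl P
  | trans _ _ ih₁ ih₂ => exact ih₂.trans ih₁
  | parCong _ _ ih₁ ih₂ => exact parCong ih₁ ih₂
  | swap => exact swap
  | assoc => exact assoc_symm

theorem exchange {P Q R : Sys} : StructCongr (.par P (.par Q R)) (.par Q (.par P R)) :=
  assoc_symm.trans <| (parCong swap (refl R)).trans assoc

theorem sstep_swap {P Q S : Sys} {μ : SLabel} (h : SStep (.par P Q) μ S) :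
    ∃ S', SStep (.par Q P) μ S' ∧ StructCongr S S' := by
  cases h with
  | parL h hμ => exact ⟨_, .parR h hμ, swap⟩
  | parR h hμ => exact ⟨_, .parL h hμ, swap⟩
  | commLR h₁ h₂ => exact ⟨_, .commRL h₂ h₁, swap⟩
  | commRL h₁ h₂ => exact ⟨_, .commLR h₂ h₁, swap⟩
  | parTick h₁ h₂ => exact ⟨_, .parTick h₂ h₁, swap⟩

theorem sstep_assoc {P Q R S : Sys} {μ : SLabel} (h : SStep (.par (.par P Q) R) μ S) :
    ∃ S', SStep (.par P (.par Q R)) μ S' ∧ StructCongr S S' := by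
  cases h with
  | parL h hμ =>
    cases h with
    | parL h _ => exact ⟨_, .parL h hμ, assoc⟩
    | parR h _ => exact ⟨_, .parR (.parL h hμ) hμ, assoc⟩
    | commLR h₁ h₂ => exact ⟨_, .commLR h₁ (.parL h₂ SLabel.noConfusion), assoc⟩
    | commRL h₁ h₂ => exact ⟨_, .commRL h₁ (.parL h₂ SLabel.noConfusion), assoc⟩
    | parTick => exact absurd rfl hμ
  | parR h hμ => exact ⟨_, .parR (.parR h hμ) hμ, assoc⟩
  | commLR h₁ h₂ =>
    cases h₁ with
    | parL h _ => exact ⟨_, .commLR h (.parR h₂ SLabel.noConfusion), assoc⟩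
    | parR h _ => exact ⟨_, .parR (.commLR h h₂) SLabel.noConfusion, assoc⟩
  | commRL h₁ h₂ =>
    cases h₁ with
    | parL h _ => exact ⟨_, .commRL h (.parR h₂ SLabel.noConfusion), assoc⟩
    | parR h _ => exact ⟨_, .parR (.commRL h h₂) SLabel.noConfusion, assoc⟩
  | parTick h₁ h₂ =>
    cases h₁ with
    | parL _ hμ => exact absurd rfl hμ
    | parR _ hμ => exact absurd rfl hμ
    | parTick h₁ h₁' => exact ⟨_, .parTick h₁ (.parTick h₁' h₂), assoc⟩

theorem sstep_parCong {P P' Q Q' S : Sys} {μ : SLabel}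
    (hP : ∀ μ P₁, SStep P μ P₁ → ∃ P₂, SStep P' μ P₂ ∧ StructCongr P₁ P₂)
    (hQ : ∀ μ Q₁, SStep Q μ Q₁ → ∃ Q₂, SStep Q' μ Q₂ ∧ StructCongr Q₁ Q₂)
    (hPP' : StructCongr P P') (hQQ' : StructCongr Q Q') (h : SStep (.par P Q) μ S) :
    ∃ S', SStep (.par P' Q') μ S' ∧ StructCongr S S' := by
  cases h with
  | parL h hμ =>
    obtain ⟨P₂, h', hc⟩ := hP _ _ h
    exact ⟨_, .parL h' hμ, parCong hc hQQ'⟩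
  | parR h hμ =>
    obtain ⟨Q₂, h', hc⟩ := hQ _ _ h
    exact ⟨_, .parR h' hμ, parCong hPP' hc⟩
  | commLR h₁ h₂ =>
    obtain ⟨P₂, h₁', hc₁⟩ := hP _ _ h₁
    obtain ⟨Q₂, h₂', hc₂⟩ := hQ _ _ h₂
    exact ⟨_, .commLR h₁' h₂', parCong hc₁ hc₂⟩
  | commRL h₁ h₂ =>
    obtain ⟨P₂, h₁', hc₁⟩ := hP _ _ h₁
    obtain ⟨Q₂, h₂', hc₂⟩ := hQ _ _ h₂
    exact ⟨_, .commRL h₁' h₂', parCong hc₁ hc₂⟩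
  | parTick h₁ h₂ =>
    obtain ⟨P₂, h₁', hc₁⟩ := hP _ _ h₁
    obtain ⟨Q₂, h₂', hc₂⟩ := hQ _ _ h₂
    exact ⟨_, .parTick h₁' h₂', parCong hc₁ hc₂⟩

theorem sstep {P Q : Sys} (h : StructCongr P Q) :
    ∀ μ P₁, SStep P μ P₁ → ∃ Q₁, SStep Q μ Q₁ ∧ StructCongr P₁ Q₁ := by
  induction h with
  | refl P => exact fun _ P₁ h => ⟨P₁, h, refl P₁⟩
  | trans _ _ ih₁ ih₂ =>
    intro μ P₁ h
    obtain ⟨Q₁, hQ₁, hc₁⟩ := ih₁ μ P₁ h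
    obtain ⟨R₁, hR₁, hc₂⟩ := ih₂ μ Q₁ hQ₁
    exact ⟨R₁, hR₁, hc₁.trans hc₂⟩
  | parCong hP hQ ih₁ ih₂ => exact fun _ _ h => sstep_parCong ih₁ ih₂ hP hQ h
  | swap => exact fun _ _ => sstep_swap
  | assoc => exact fun _ _ => sstep_assoc

theorem completeStep {P Q P₁ : Sys} (h : StructCongr P Q) (hs : CompleteStep P P₁) :
    ∃ Q₁, CompleteStep Q Q₁ ∧ StructCongr P₁ Q₁ := by
  rcases hs with hs | ⟨a, r, s, hs⟩
  · obtain ⟨Q₁, hQ₁, hc⟩ := h.sstep _ _ hs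
    exact ⟨Q₁, .inl hQ₁, hc⟩
  · obtain ⟨Q₁, hQ₁, hc⟩ := h.sstep _ _ hs
    exact ⟨Q₁, .inr ⟨a, r, s, hQ₁⟩, hc⟩

theorem correct {P Q : Sys} (h : StructCongr P Q) (hc : Correct P) : Correct Q :=
  Correct.of_bisimulation (R := StructCongr) (fun _ _ _ h hs => h.completeStep hs)
    (fun _ _ _ h hs => (h.symm.completeStep hs).imp fun _ ⟨hs', hc⟩ => ⟨hs', hc.symm⟩)
    (fun _ _ h ⟨_, hs⟩ => (h.sstep _ _ hs).imp fun _ ⟨hs', _⟩ => hs') h hc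

end StructCongr

theorem completeStep_par_left {P P' Q : Sys} (h : CompleteStep P P') :
    CompleteStep (.par P Q) (.par P' Q) := by
  rcases h with h | ⟨a, r, s, h⟩
  · exact .inl (.parL h SLabel.noConfusion)
  · exact .inr ⟨a, r, s, .parL h SLabel.noConfusion⟩

theorem sstep_atom_one {r : Role} {μ : SLabel} {S : Sys} (h : SStep (.atom .one r) μ S) :
    μ = .tick := by
  cases h with
  | atomTick => rfl
  | atomTau h | atomInp h | atomOut h => cases h

theorem completeStep_par_atom_one {P X : Sys} {r : Role}
    (h : CompleteStep (.par P (.atom .one r)) X) :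
    ∃ P', X = .par P' (.atom .one r) ∧ CompleteStep P P' := by
  rcases h with h | ⟨a, s, t, h⟩ <;> cases h
  all_goals first
    | exact ⟨_, rfl, .inl ‹_›⟩
    | exact ⟨_, rfl, .inr ⟨a, s, t, ‹_›⟩⟩
    | exact absurd (sstep_atom_one ‹_›) SLabel.noConfusion

theorem canTick_par_atom_one_iff {P : Sys} {r : Role} :
    CanTick (.par P (.atom .one r)) ↔ CanTick P := by
  constructor
  · rintro ⟨X, h⟩
    cases h with
    | parL _ hμ | parR _ hμ => exact absurd rfl hμ
    | parTick h _ => exact ⟨_, h⟩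
  · rintro ⟨P', h⟩
    exact ⟨_, .parTick h (.atomTick .one)⟩

theorem correct_par_atom_one_iff {P : Sys} {r : Role} :
    Correct (.par P (.atom .one r)) ↔ Correct P := by
  constructor
  · refine Correct.of_bisimulation (R := fun X P => X = .par P (.atom .one r)) ?_ ?_ ?_ rfl
    · rintro _ P X rfl hs
      obtain ⟨P', rfl, hs'⟩ := completeStep_par_atom_one hs
      exact ⟨P', hs', rfl⟩
    · rintro _ P P' rfl hs
      exact ⟨_, completeStep_par_left hs, rfl⟩
    · rintro _ P rfl
      exact canTick_par_atom_one_iff.mp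
  · refine Correct.of_bisimulation (R := fun P X => X = .par P (.atom .one r)) ?_ ?_ ?_ rfl
    · rintro P _ P' rfl hs
      exact ⟨_, completeStep_par_left hs, rfl⟩
    · rintro P _ X rfl hs
      obtain ⟨P', rfl, hs'⟩ := completeStep_par_atom_one hs
      exact ⟨P', hs', rfl⟩
    · rintro P _ rfl
      exact canTick_par_atom_one_iff.mpr

theorem outputPersistent_one : OutputPersistent .one := by
  rintro C' hr a l ⟨D, hD⟩
  rcases hr with _ | ⟨h₁, _ | ⟨h₂, _⟩⟩
  · cases hD
  · cases h₁; cases hD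
  · cases h₁; cases h₂

theorem composeC_cons {x : Orc × Role} {xs : List (Orc × Role)} (h : xs ≠ []) :
    composeC (x :: xs) = .par (.atom x.1 x.2) (composeC xs) := by
  cases xs with
  | nil => exact absurd rfl h
  | cons y ys => rfl

theorem allOP_composeC {xs : List (Orc × Role)} (h : ∀ y ∈ xs, OutputPersistent y.1) :
    AllOP (composeC xs) := by
  induction xs with
  | nil => exact outputPersistent_one
  | cons x xs ih =>
    cases xs with
    | nil => exact h x (by simp)
    | cons y ys => exact ⟨h x (by simp), ih fun z hz => h z (.tail _ hz)⟩

theorem noSelfOut_composeC {xs : List (Orc × Role)} (h : ∀ y ∈ xs, y.2 ∉ oroles y.1) :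
    NoSelfOut (composeC xs) := by
  induction xs with
  | nil => simp [composeC, NoSelfOut, oroles]
  | cons x xs ih =>
    cases xs with
    | nil => exact h x (by simp)
    | cons y ys => exact ⟨h x (by simp), ih fun z hz => h z (.tail _ hz)⟩

theorem rolesList_composeC {xs : List (Orc × Role)} (h : xs ≠ []) :
    rolesList (composeC xs) = xs.map Prod.snd := by
  induction xs with
  | nil => exact absurd rfl h
  | cons x xs ih =>
    cases xs with
    | nil => rfl
    | cons y ys => simp [composeC, rolesList, ← ih]

theorem StructCongr.composeC_of_perm {xs ys : List (Orc × Role)} (h : xs.Perm ys) :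
    StructCongr (composeC xs) (composeC ys) := by
  induction h with
  | nil => exact .refl _
  | @cons x l₁ l₂ h ih =>
    rcases eq_or_ne l₁ [] with rfl | hl₁
    · obtain rfl := h.nil_eq
      exact .refl _
    · have hl₂ : l₂ ≠ [] := by rintro rfl; exact hl₁ h.eq_nil
      rw [composeC_cons hl₁, composeC_cons hl₂]
      exact .parCong (.refl _) ih
  | swap x y l =>
    rcases eq_or_ne l [] with rfl | hl
    · exact .swap
    · simp only [composeC_cons hl, composeC_cons (List.cons_ne_nil _ _)]
      exact .exchange
  | trans _ _ ih₁ ih₂ => exact ih₁.trans ih₂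

theorem Correct.composeC_of_perm {xs ys : List (Orc × Role)} (h : xs.Perm ys)
    (hc : Correct (composeC xs)) : Correct (composeC ys) :=
  (StructCongr.composeC_of_perm h).correct hc

namespace Orc

def rename (σ : Role → Role) : Orc → Orc
  | .out a r => .out a (σ r)
  | .seq C D => .seq (C.rename σ) (D.rename σ)
  | .choice C D => .choice (C.rename σ) (D.rename σ)
  | .par C D => .par (C.rename σ) (D.rename σ)
  | .star C => .star (C.rename σ)
  | C => C

@[simp]
theorem rename_symm_rename (σ : Equiv.Perm Role) (C : Orc) :
    (C.rename σ).rename σ.symm = C := by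
  induction C <;> simp [rename, *]

@[simp]
theorem rename_rename_symm (σ : Equiv.Perm Role) (C : Orc) :
    (C.rename σ.symm).rename σ = C := by
  simpa using rename_symm_rename σ.symm C

theorem rename_eq_self {σ : Role → Role} {C : Orc} (h : ∀ r ∈ oroles C, σ r = r) :
    C.rename σ = C := by
  induction C <;> simp_all [rename, oroles]

end Orc

def OLabel.rename (σ : Role → Role) : OLabel → OLabel
  | .out a r => .out a (σ r)
  | μ => μ

def Sys.rename (σ : Role → Role) : Sys → Sys
  | .atom C r => .atom (C.rename σ) (σ r)
  | .par P Q => .par (P.rename σ) (Q.rename σ)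

@[simp]
theorem Sys.rename_symm_rename (σ : Equiv.Perm Role) (P : Sys) :
    (P.rename σ).rename σ.symm = P := by
  induction P <;> simp [rename, *]

@[simp]
theorem Sys.rename_rename_symm (σ : Equiv.Perm Role) (P : Sys) :
    (P.rename σ.symm).rename σ = P := by
  simpa using Sys.rename_symm_rename σ.symm P

def SLabel.rename (σ : Role → Role) : SLabel → SLabel
  | .tau => .tau
  | .inp a r => .inp a (σ r)
  | .out a r s => .out a (σ r) (σ s)
  | .comm a r s => .comm a (σ r) (σ s)
  | .tick => .tick

section

variable {σ : Role → Role}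

theorem OStep.rename {C C' : Orc} {μ : OLabel} (h : OStep C μ C') :
    OStep (C.rename σ) (μ.rename σ) (C'.rename σ) := by
  have ne_tick {μ : OLabel} (h : μ ≠ .tick) : μ.rename σ ≠ .tick := by
    cases μ <;> simp_all [OLabel.rename]
  induction h with
  | one => exact .one
  | tau => exact .tau
  | inp => exact .inp
  | out => exact .out
  | choiceL _ ih => exact .choiceL ih
  | choiceR _ ih => exact .choiceR ih
  | seqL _ hμ ih => exact .seqL ih (ne_tick hμ)
  | seqTick _ _ ih₁ ih₂ => exact .seqTick ih₁ ih₂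
  | parL _ hμ ih => exact .parL ih (ne_tick hμ)
  | parR _ hμ ih => exact .parR ih (ne_tick hμ)
  | parTick _ _ ih₁ ih₂ => exact .parTick ih₁ ih₂
  | starTick => exact .starTick
  | starStep _ hμ ih => exact .starStep ih (ne_tick hμ)

theorem SStep.rename {P P' : Sys} {μ : SLabel} (h : SStep P μ P') :
    SStep (P.rename σ) (μ.rename σ) (P'.rename σ) := by
  have ne_tick {μ : SLabel} (h : μ ≠ .tick) : μ.rename σ ≠ .tick := by
    cases μ <;> simp_all [SLabel.rename]
  induction h with
  | atomTau h => exact .atomTau h.rename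
  | atomInp h => exact .atomInp h.rename
  | atomOut h => exact .atomOut h.rename
  | atomTick h => exact .atomTick h.rename
  | parL _ hμ ih => exact .parL ih (ne_tick hμ)
  | parR _ hμ ih => exact .parR ih (ne_tick hμ)
  | commLR _ _ ih₁ ih₂ => exact .commLR ih₁ ih₂
  | commRL _ _ ih₁ ih₂ => exact .commRL ih₁ ih₂
  | parTick _ _ ih₁ ih₂ => exact .parTick ih₁ ih₂

theorem CompleteStep.rename {P P' : Sys} (h : CompleteStep P P') :
    CompleteStep (P.rename σ) (P'.rename σ) := by
  rcases h with h | ⟨a, r, s, h⟩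
  · exact .inl h.rename
  · exact .inr ⟨a, σ r, σ s, h.rename⟩

theorem CanTick.rename {P : Sys} (h : CanTick P) : CanTick (P.rename σ) := by
  obtain ⟨P', h⟩ := h
  exact ⟨P'.rename σ, h.rename⟩

theorem OReach.rename {C D : Orc} (h : OReach C D) : OReach (C.rename σ) (D.rename σ) := by
  induction h with
  | refl C => exact .refl _
  | step h _ ih => exact .step h.rename ih

theorem oroles_rename (C : Orc) : oroles (C.rename σ) = (oroles C).image σ := by
  induction C <;> simp [Orc.rename, oroles, Finset.image_union, *]

theorem rolesList_rename (P : Sys) : rolesList (P.rename σ) = (rolesList P).map σ := by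
  induction P <;> simp [Sys.rename, rolesList, *]

end

theorem Correct.rename (σ : Equiv.Perm Role) {P : Sys} (hc : Correct P) :
    Correct (P.rename σ) := by
  refine Correct.of_bisimulation (R := fun P Q => Q = P.rename σ)
    (fun P _ P' hQ hs => ⟨P'.rename σ, hQ ▸ hs.rename, rfl⟩) ?_
    (fun P _ hQ h => hQ ▸ h.rename) rfl hc
  rintro P _ Q' rfl hs
  exact ⟨Q'.rename σ.symm, by simpa using hs.rename (σ := σ.symm), by simp⟩

theorem OutputPersistent.rename (σ : Equiv.Perm Role) {C : Orc} (h : OutputPersistent C) :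
    OutputPersistent (C.rename σ) := by
  rintro C₂ hr a l ⟨E, hE⟩
  -- transport everything back to `C` along `σ⁻¹`
  have hr' : OReach C (C₂.rename σ.symm) := by simpa using hr.rename (σ := σ.symm)
  obtain ⟨hnoTick, hpersist⟩ := h _ hr' a (σ.symm l) ⟨_, hE.rename (σ := σ.symm)⟩
  refine ⟨fun ⟨D, hD⟩ => hnoTick ⟨_, hD.rename (σ := σ.symm)⟩, fun μ C₃ hs hμ => ?_⟩
  have hμ' : μ.rename σ.symm ≠ .out a (σ.symm l) := by
    cases μ <;> simp_all [OLabel.rename]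
  obtain ⟨D, hD⟩ := hpersist _ _ hs.rename hμ'
  exact ⟨_, by simpa [OLabel.rename] using hD.rename (σ := σ)⟩

theorem AllOP.rename (σ : Equiv.Perm Role) {P : Sys} (h : AllOP P) : AllOP (P.rename σ) := by
  induction P with
  | atom C r => exact OutputPersistent.rename σ h
  | par P Q ih₁ ih₂ => exact ⟨ih₁ h.1, ih₂ h.2⟩

theorem NoSelfOut.rename (σ : Equiv.Perm Role) {P : Sys} (h : NoSelfOut P) :
    NoSelfOut (P.rename σ) := by
  induction P with
  | atom C r => simpa [Sys.rename, NoSelfOut, oroles_rename] using h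
  | par P Q ih₁ ih₂ => exact ⟨ih₁ h.1, ih₂ h.2⟩

theorem WFSys.rename (σ : Equiv.Perm Role) {P : Sys} (h : WFSys P) : WFSys (P.rename σ) :=
  ⟨by simpa [rolesList_rename] using h.1.map σ.injective, h.2.rename σ⟩

theorem correct_par_atom_swap_iff {C : Orc} {l l' : Role} (hl : l ∉ oroles C)
    (hl' : l' ∉ oroles C) {P : Sys} :
    Correct (.par (.atom C l') (P.rename (Equiv.swap l l'))) ↔ Correct (.par (.atom C l) P) := by
  have hC : C.rename (Equiv.swap l l') = C := Orc.rename_eq_self fun r hr =>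
    Equiv.swap_apply_of_ne_of_ne (ne_of_mem_of_not_mem hr hl) (ne_of_mem_of_not_mem hr hl')
  have hrename : (Sys.par (.atom C l) P).rename (Equiv.swap l l') =
      .par (.atom C l') (P.rename (Equiv.swap l l')) := by
    simp [Sys.rename, hC]
  constructor
  · intro hc
    rw [← hrename] at hc
    simpa only [Sys.rename_symm_rename] using hc.rename (Equiv.swap l l').symm
  · intro hc
    simpa only [hrename] using hc.rename (Equiv.swap l l')

theorem Subcontract.trans {C₁ C₂ C₃ : Orc} (h₁₂ : Subcontract C₁ C₂)
    (h₂₃ : Subcontract C₂ C₃) : Subcontract C₁ C₃ := by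
  intro l hl P hOP hWF hlP hc
  obtain ⟨l', hl'⟩ := Infinite.exists_notMem_finset
    (oroles C₁ ∪ oroles C₂ ∪ oroles C₃ ∪ (rolesList P).toFinset)
  simp only [Finset.mem_union, List.mem_toFinset, not_or] at hl hl'
  obtain ⟨⟨⟨hl'₁, hl'₂⟩, hl'₃⟩, hl'P⟩ := hl'
  set σ := Equiv.swap l l'
  have hOP' := hOP.rename σ
  have hWF' := hWF.rename σ
  have hlP' : l' ∉ rolesList (P.rename σ) := by
    rwa [rolesList_rename, ← Equiv.swap_apply_left l l', List.mem_map_of_injective σ.injective]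
  rw [← correct_par_atom_swap_iff hl.1 hl'₃] at hc
  rw [← correct_par_atom_swap_iff hl.2 hl'₁]
  exact h₁₂ l' (by simp [*]) _ hOP' hWF' hlP' (h₂₃ l' (by simp [*]) _ hOP' hWF' hlP' hc)

theorem Subcontract.correct_composeC_cons {C C' : Orc} {l : Role} {xs : List (Orc × Role)}
    (hsub : Subcontract C' C) (hl : l ∉ oroles C ∪ oroles C')
    (hxs : ∀ y ∈ xs, OutputPersistent y.1 ∧ y.2 ∉ oroles y.1)
    (hnd : (l :: xs.map Prod.snd).Nodup) (hc : Correct (composeC ((C, l) :: xs))) :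
    Correct (composeC ((C', l) :: xs)) := by
  rcases eq_or_ne xs [] with rfl | hne
  · obtain ⟨r, hr⟩ := Infinite.exists_notMem_finset ({l} : Finset Role)
    have hlr : l ∉ rolesList (.atom .one r) := by simpa [rolesList, eq_comm] using hr
    refine correct_par_atom_one_iff.mp (hsub l hl _ outputPersistent_one ?_ hlr
      (correct_par_atom_one_iff.mpr hc))
    exact ⟨List.nodup_singleton r, by simp [NoSelfOut, oroles]⟩
  · rw [composeC_cons hne] at hc ⊢
    refine hsub l hl _ (allOP_composeC fun y hy => (hxs y hy).1) ?_ ?_ hc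
    · exact ⟨rolesList_composeC hne ▸ (List.nodup_cons.mp hnd).2,
        noSelfOut_composeC fun y hy => (hxs y hy).2⟩
    · exact rolesList_composeC hne ▸ (List.nodup_cons.mp hnd).1

theorem Subcontract.correct_composeC_append (L : List (Orc × Orc × Role))
    (hL : ∀ x ∈ L, OutputPersistent x.1 ∧ OutputPersistent x.2.1 ∧ Subcontract x.2.1 x.1)
    (hroles : ∀ x ∈ L, x.2.2 ∉ oroles x.1 ∪ oroles x.2.1) (ys : List (Orc × Role))
    (hys : ∀ y ∈ ys, OutputPersistent y.1 ∧ y.2 ∉ oroles y.1)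
    (hnd : (L.map (·.2.2) ++ ys.map Prod.snd).Nodup)
    (hc : Correct (composeC (L.map (fun x => (x.1, x.2.2)) ++ ys))) :
    Correct (composeC (L.map (fun x => (x.2.1, x.2.2)) ++ ys)) := by
  induction L generalizing ys with
  | nil => exact hc
  | cons x L ih =>
    obtain ⟨-, hOP', hsub⟩ := hL x (by simp)
    have hx := hroles x (by simp)
    simp only [Finset.mem_union, not_or] at hx
    have hrest : ∀ y ∈ L.map (fun x => (x.1, x.2.2)) ++ ys,
        OutputPersistent y.1 ∧ y.2 ∉ oroles y.1 := by
      simp only [List.mem_append, List.mem_map]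
      rintro y (⟨z, hz, rfl⟩ | hy)
      · have hz' := hroles z (.tail _ hz)
        simp only [Finset.mem_union, not_or] at hz'
        exact ⟨(hL z (.tail _ hz)).1, hz'.1⟩
      · exact hys y hy
    have hrefined :
        Correct (composeC ((x.2.1, x.2.2) :: (L.map (fun x => (x.1, x.2.2)) ++ ys))) :=
      hsub.correct_composeC_cons (hroles x (by simp)) hrest
        (by simpa [Function.comp_def] using hnd) hc
    have hmoved := ih (fun z hz => hL z (.tail _ hz)) (fun z hz => hroles z (.tail _ hz))
      ((x.2.1, x.2.2) :: ys) (List.forall_mem_cons.mpr ⟨⟨hOP', hx.2⟩, hys⟩)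
      (List.perm_middle.nodup_iff.mpr (by simpa using hnd))
      (hrefined.composeC_of_perm List.perm_middle.symm)
    exact hmoved.composeC_of_perm List.perm_middle

/-- The subcontract relation `⪯` over output persistent
contracts is an independent subcontract pre-order: it is a pre-order and, for
any `n ≥ 1`, output persistent contracts `C₁,…,Cₙ` and `C'₁,…,C'ₙ` with
`C'ᵢ ⪯ Cᵢ`, and pairwise distinct roles `lᵢ ∉ oroles(Cᵢ) ∪ oroles(C'ᵢ)`,
correctness of `[C₁]_{l₁} || … || [Cₙ]_{lₙ}` implies correctness of
`[C'₁]_{l₁} || … || [C'ₙ]_{lₙ}`. -/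
theorem subcontract_is_independent_subcontract_preorder :
    IndepSubcontractPre Subcontract := by
  refine ⟨fun _ _ _ _ _ _ _ _ hc => hc, fun _ _ _ _ _ _ h₁₂ h₂₃ => h₁₂.trans h₂₃, ?_⟩
  intro L _ hL hnd hroles hc
  simpa using Subcontract.correct_composeC_append L hL hroles [] (by simp) (by simpa using hnd)
    (by simpa using hc)
end

section
/- For all output persistent contracts C and C': C' \\ (I(C') − I(C)) ⪯ C if and only if C' ⪯ C, where C \\ M replaces every input on a name in M occurring in C by 0 and I(C) is the set of input action names syntactically occurring in C. -/
/-!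
Write `M = I(C') − I(C)`. A test `P` can only tell `C'` and `C' \ M` apart through a
communication `a_{r→l}` with `a ∈ M`. Since the tests are output persistent, an output `ā_l`
of `P`, once enabled, stays enabled and forbids `√` until it is consumed; if the contract at
`l` can never consume it, or if it has been deleted from `P`, the composition is stuck.

Hiding a set of actions gives a system whose runs are exactly the runs of the original system
that avoid them, so as long as no `M`-communication toward `l` is ever enabled, hiding the
inputs on `M` at `l` (that is, passing from `C'` to `C' \ M`) preserves and reflects
correctness. If `[C' \ M]_l ‖ P` is correct, no such communication is ever enabled in
`[C']_l ‖ P`: the first state enabling one would make the hidden system stuck. Conversely,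
if `C' ⪯ C` and `[C]_l ‖ P` is correct, let `P̂` be `P` with its outputs on `M` toward `l`
hidden. As `C` never receives on `M`, `[C]_l ‖ P̂` is correct, hence so is `[C']_l ‖ P̂`; a
run of `[C']_l ‖ P` enabling an `M`-communication toward `l` would leave `P̂` stuck on a
hidden output.
-/

theorem OStep.inames_subset {C C' : Orc} {μ : OLabel} (h : OStep C μ C') :
    inames C' ⊆ inames C := by
  induction h <;> simp only [inames] <;> grind

theorem OStep.inp_mem_inames {C C' : Orc} {a : AName} (h : OStep C (.inp a) C') :
    a ∈ inames C := by
  generalize hμ : OLabel.inp a = μ at h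
  induction h <;> cases hμ <;> simp_all [inames]

theorem OutputPersistent.step {C C' : Orc} {μ : OLabel} (h : OutputPersistent C)
    (hs : OStep C μ C') : OutputPersistent C' :=
  fun _ hr => h _ (.step hs hr)

theorem oroles_restrict (C : Orc) (M : Finset AName) :
    oroles (restrict C M) = oroles C := by
  induction C <;> simp_all [restrict, oroles]
  split <;> rfl

open Classical in
noncomputable def Orc.hide (I : AName → Prop) (O : AName → Role → Prop) : Orc → Orc
  | .inp a => if I a then .zero else .inp a
  | .out a s => if O a s then .zero else .out a s
  | .seq C D => .seq (C.hide I O) (D.hide I O)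
  | .choice C D => .choice (C.hide I O) (D.hide I O)
  | .par C D => .par (C.hide I O) (D.hide I O)
  | .star C => .star (C.hide I O)
  | C => C

def OLabel.Hidden (I : AName → Prop) (O : AName → Role → Prop) : OLabel → Prop
  | .inp a => I a
  | .out a s => O a s
  | _ => False

section ContractHiding

variable {I : AName → Prop} {O : AName → Role → Prop}

theorem restrict_eq_hide (C : Orc) (M : Finset AName) :
    restrict C M = C.hide (· ∈ M) (fun _ _ => False) := by
  induction C <;> simp_all [restrict, Orc.hide]

theorem Orc.hide_eq_self {C : Orc} (hI : ∀ a, ¬ I a) (hO : ∀ a, ∀ s ∈ oroles C, ¬ O a s) :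
    C.hide I O = C := by
  induction C <;> simp_all [Orc.hide, oroles]

theorem oroles_hide_subset (C : Orc) : oroles (C.hide I O) ⊆ oroles C := by
  induction C <;> simp only [Orc.hide, oroles] <;> (try split_ifs) <;>
    grind [oroles]

theorem OStep.hide {C C' : Orc} {μ : OLabel} (h : OStep C μ C') (hμ : ¬ μ.Hidden I O) :
    OStep (C.hide I O) μ (C'.hide I O) := by
  induction h with
  | inp => rw [Orc.hide, if_neg (show ¬ I _ from hμ)]; exact .inp
  | out => rw [Orc.hide, if_neg (show ¬ O _ _ from hμ)]; exact .out
  | seqTick _ _ ih₁ ih₂ => exact .seqTick (ih₁ id) (ih₂ hμ)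
  | parTick _ _ ih₁ ih₂ => exact .parTick (ih₁ id) (ih₂ id)
  | choiceL _ ih => exact .choiceL (ih hμ)
  | choiceR _ ih => exact .choiceR (ih hμ)
  | seqL _ hne ih => exact .seqL (ih hμ) hne
  | parL _ hne ih => exact .parL (ih hμ) hne
  | parR _ hne ih => exact .parR (ih hμ) hne
  | starStep _ hne ih => exact .starStep (ih hμ) hne
  | one => exact .one
  | tau => exact .tau
  | starTick => exact .starTick

theorem OStep.of_hide {C E : Orc} {μ : OLabel} (h : OStep (C.hide I O) μ E) :
    ∃ C', OStep C μ C' ∧ E = C'.hide I O ∧ ¬ μ.Hidden I O := by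
  induction C generalizing μ E with
  | zero => cases h
  | one => cases h; exact ⟨_, .one, rfl, id⟩
  | tau => cases h; exact ⟨_, .tau, rfl, id⟩
  | inp a =>
    rw [Orc.hide] at h
    split_ifs at h with ha <;> cases h
    exact ⟨_, .inp, rfl, ha⟩
  | out a s =>
    rw [Orc.hide] at h
    split_ifs at h with ha <;> cases h
    exact ⟨_, .out, rfl, ha⟩
  | seq C D ih₁ ih₂ =>
    cases h with
    | seqL h hne =>
      obtain ⟨C', hC, rfl, hμ⟩ := ih₁ h
      exact ⟨_, .seqL hC hne, rfl, hμ⟩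
    | seqTick h₁ h₂ =>
      obtain ⟨C', hC, -, -⟩ := ih₁ h₁
      obtain ⟨D', hD, rfl, hμ⟩ := ih₂ h₂
      exact ⟨_, .seqTick hC hD, rfl, hμ⟩
  | choice C D ih₁ ih₂ =>
    cases h with
    | choiceL h =>
      obtain ⟨C', hC, rfl, hμ⟩ := ih₁ h
      exact ⟨_, .choiceL hC, rfl, hμ⟩
    | choiceR h =>
      obtain ⟨D', hD, rfl, hμ⟩ := ih₂ h
      exact ⟨_, .choiceR hD, rfl, hμ⟩
  | par C D ih₁ ih₂ =>
    cases h with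
    | parL h hne =>
      obtain ⟨C', hC, rfl, hμ⟩ := ih₁ h
      exact ⟨.par C' D, .parL hC hne, rfl, hμ⟩
    | parR h hne =>
      obtain ⟨D', hD, rfl, hμ⟩ := ih₂ h
      exact ⟨.par C D', .parR hD hne, rfl, hμ⟩
    | parTick h₁ h₂ =>
      obtain ⟨C', hC, rfl, -⟩ := ih₁ h₁
      obtain ⟨D', hD, rfl, -⟩ := ih₂ h₂
      exact ⟨.par C' D', .parTick hC hD, rfl, id⟩
  | star C ih =>
    cases h with
    | starTick => exact ⟨_, .starTick, rfl, id⟩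
    | starStep h hne =>
      obtain ⟨C', hC, rfl, hμ⟩ := ih h
      exact ⟨.seq C' (.star C), .starStep hC hne, rfl, hμ⟩

theorem OReach.of_hide {C E : Orc} (h : OReach (C.hide I O) E) :
    ∃ C', OReach C C' ∧ E = C'.hide I O := by
  generalize hC : C.hide I O = D at h
  induction h generalizing C with
  | refl => exact ⟨C, .refl C, hC.symm⟩
  | step hs _ ih =>
    subst hC
    obtain ⟨C', hC', rfl, -⟩ := hs.of_hide
    obtain ⟨C'', hr, rfl⟩ := ih rfl
    exact ⟨C'', .step hC' hr, rfl⟩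

theorem OutputPersistent.hide {C : Orc} (h : OutputPersistent C) :
    OutputPersistent (C.hide I O) := by
  rintro _ hr a l ⟨_, hout⟩
  obtain ⟨D, hD, rfl⟩ := OReach.of_hide hr
  obtain ⟨_, hout', -, hvis⟩ := hout.of_hide
  obtain ⟨hnotick, hpersist⟩ := h D hD a l ⟨_, hout'⟩
  refine ⟨?_, fun μ _ hs hne => ?_⟩
  · rintro ⟨_, htick⟩
    obtain ⟨_, htick', -⟩ := htick.of_hide
    exact hnotick ⟨_, htick'⟩
  obtain ⟨D', hD', rfl, -⟩ := hs.of_hide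
  obtain ⟨G, hG⟩ := hpersist μ D' hD' hne
  exact ⟨_, hG.hide hvis⟩

end ContractHiding

theorem Reach.trans {P Q R : Sys} (h₁ : Reach P Q) (h₂ : Reach Q R) : Reach P R := by
  induction h₁ with
  | refl => exact h₂
  | step hs _ ih => exact .step hs (ih h₂)

theorem Reach.single {P Q : Sys} (h : CompleteStep P Q) : Reach P Q :=
  .step h (.refl Q)

theorem Correct.reach {P Q : Sys} (h : Correct P) (hr : Reach P Q) : Correct Q :=
  fun _ hR => h _ (hr.trans hR)

theorem CompleteStep.exists_sstep {P P' : Sys} (h : CompleteStep P P') :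
    ∃ μ, SStep P μ P' ∧ μ ≠ .tick ∧ ∀ a r s, μ ≠ .out a r s := by
  rcases h with h | ⟨_, _, _, h⟩
  exacts [⟨_, h, nofun, nofun⟩, ⟨_, h, nofun, nofun⟩]

theorem Reach.invariant {Inv : Sys → Prop}
    (hstep : ∀ S S', Inv S → CompleteStep S S' → Inv S') {S S' : Sys}
    (hr : Reach S S') (hS : Inv S) : Inv S' := by
  induction hr with
  | refl => exact hS
  | step hs _ ih => exact ih (hstep _ _ hS hs)

theorem not_correct_of_invariant {Inv : Sys → Prop}
    (hstep : ∀ S S', Inv S → CompleteStep S S' → Inv S')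
    (htick : ∀ S, Inv S → ¬ CanTick S) {S : Sys} (hS : Inv S) : ¬ Correct S := by
  intro hc
  obtain ⟨S', hr, hS'⟩ := hc S (.refl S)
  exact htick S' (hr.invariant hstep hS) hS'

theorem SStep.rolesList_eq {Q Q' : Sys} {μ : SLabel} (h : SStep Q μ Q') :
    rolesList Q' = rolesList Q := by
  induction h <;> simp_all [rolesList]

theorem SStep.mem_rolesList_of_inp {Q Q' : Sys} {a : AName} {s : Role}
    (h : SStep Q (.inp a s) Q') : s ∈ rolesList Q := by
  generalize hμ : SLabel.inp a s = μ at h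
  induction h <;> cases hμ <;> simp_all [rolesList]

theorem SStep.mem_rolesList_of_comm {Q Q' : Sys} {a : AName} {r s : Role}
    (h : SStep Q (.comm a r s) Q') : s ∈ rolesList Q := by
  generalize hμ : SLabel.comm a r s = μ at h
  induction h with
  | parL _ _ ih | parR _ _ ih => cases hμ; simp [rolesList, ih rfl]
  | commLR _ hQ => cases hμ; simp [rolesList, hQ.mem_rolesList_of_inp]
  | commRL hP _ => cases hμ; simp [rolesList, hP.mem_rolesList_of_inp]
  | _ => cases hμ

theorem AllOP.step {Q Q' : Sys} {μ : SLabel} (hop : AllOP Q) (h : SStep Q μ Q') :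
    AllOP Q' := by
  induction h with
  | atomTau h | atomInp h | atomOut h | atomTick h => exact OutputPersistent.step hop h
  | parL _ _ ih => exact ⟨ih hop.1, hop.2⟩
  | parR _ _ ih => exact ⟨hop.1, ih hop.2⟩
  | commLR _ _ ih₁ ih₂ | commRL _ _ ih₁ ih₂ | parTick _ _ ih₁ ih₂ =>
    exact ⟨ih₁ hop.1, ih₂ hop.2⟩

noncomputable def Sys.hide (I : Role → AName → Prop) (O : Role → AName → Role → Prop) : Sys → Sys
  | .atom C r => .atom (C.hide (I r) (O r)) r
  | .par P Q => .par (P.hide I O) (Q.hide I O)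

def SLabel.Hidden (I : Role → AName → Prop) (O : Role → AName → Role → Prop) : SLabel → Prop
  | .inp a r => I r a
  | .out a r s => O r a s
  | .comm a r s => O r a s ∨ I s a
  | _ => False

section SystemHiding

variable {I : Role → AName → Prop} {O : Role → AName → Role → Prop}

theorem rolesList_hide (P : Sys) : rolesList (P.hide I O) = rolesList P := by
  induction P <;> simp_all [Sys.hide, rolesList]

theorem AllOP.hide {P : Sys} (h : AllOP P) : AllOP (P.hide I O) := by
  induction P with
  | atom C r => exact OutputPersistent.hide h
  | par P Q ihP ihQ => exact ⟨ihP h.1, ihQ h.2⟩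

theorem NoSelfOut.hide {P : Sys} (h : NoSelfOut P) : NoSelfOut (P.hide I O) := by
  induction P with
  | atom C r => exact fun hr => h (oroles_hide_subset C hr)
  | par P Q ihP ihQ => exact ⟨ihP h.1, ihQ h.2⟩

theorem WFSys.hide {P : Sys} (h : WFSys P) : WFSys (P.hide I O) :=
  ⟨by rw [rolesList_hide]; exact h.1, h.2.hide⟩

theorem Sys.hide_eq_self {P : Sys} (hI : ∀ r ∈ rolesList P, ∀ a, ¬ I r a) :
    P.hide I (fun _ _ _ => False) = P := by
  induction P with
  | atom C r =>
    simp only [Sys.hide, rolesList, List.mem_singleton, forall_eq] at hI ⊢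
    rw [Orc.hide_eq_self hI fun _ _ _ => id]
  | par P Q ihP ihQ =>
    simp only [rolesList, List.mem_append] at hI
    rw [Sys.hide, ihP fun r hr => hI r (.inl hr), ihQ fun r hr => hI r (.inr hr)]

theorem SStep.hide {P P' : Sys} {μ : SLabel} (h : SStep P μ P') (hμ : ¬ μ.Hidden I O) :
    SStep (P.hide I O) μ (P'.hide I O) := by
  induction h with
  | atomTau h => exact .atomTau (h.hide id)
  | atomInp h => exact .atomInp (h.hide hμ)
  | atomOut h => exact .atomOut (h.hide hμ)
  | atomTick h => exact .atomTick (h.hide id)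
  | parL _ hne ih => exact .parL (ih hμ) hne
  | parR _ hne ih => exact .parR (ih hμ) hne
  | commLR _ _ ih₁ ih₂ => exact .commLR (ih₁ fun h => hμ (.inl h)) (ih₂ fun h => hμ (.inr h))
  | commRL _ _ ih₁ ih₂ => exact .commRL (ih₁ fun h => hμ (.inr h)) (ih₂ fun h => hμ (.inl h))
  | parTick _ _ ih₁ ih₂ => exact .parTick (ih₁ id) (ih₂ id)

theorem SStep.of_hide {P T : Sys} {μ : SLabel} (h : SStep (P.hide I O) μ T) :
    ∃ P', T = P'.hide I O ∧ SStep P μ P' ∧ ¬ μ.Hidden I O := by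
  induction P generalizing μ T with
  | atom C r =>
    cases h with
    | atomTau h =>
      obtain ⟨C', hC, rfl, -⟩ := h.of_hide
      exact ⟨.atom C' r, rfl, .atomTau hC, id⟩
    | atomInp h =>
      obtain ⟨C', hC, rfl, hμ⟩ := h.of_hide
      exact ⟨.atom C' r, rfl, .atomInp hC, hμ⟩
    | atomOut h =>
      obtain ⟨C', hC, rfl, hμ⟩ := h.of_hide
      exact ⟨.atom C' r, rfl, .atomOut hC, hμ⟩
    | atomTick h =>
      obtain ⟨C', hC, rfl, -⟩ := h.of_hide
      exact ⟨.atom C' r, rfl, .atomTick hC, id⟩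
  | par P Q ihP ihQ =>
    cases h with
    | parL h hne =>
      obtain ⟨P', rfl, hP, hμ⟩ := ihP h
      exact ⟨.par P' Q, rfl, .parL hP hne, hμ⟩
    | parR h hne =>
      obtain ⟨Q', rfl, hQ, hμ⟩ := ihQ h
      exact ⟨.par P Q', rfl, .parR hQ hne, hμ⟩
    | commLR h₁ h₂ =>
      obtain ⟨P', rfl, hP, hμ₁⟩ := ihP h₁
      obtain ⟨Q', rfl, hQ, hμ₂⟩ := ihQ h₂
      exact ⟨.par P' Q', rfl, .commLR hP hQ, not_or.2 ⟨hμ₁, hμ₂⟩⟩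
    | commRL h₁ h₂ =>
      obtain ⟨P', rfl, hP, hμ₁⟩ := ihP h₁
      obtain ⟨Q', rfl, hQ, hμ₂⟩ := ihQ h₂
      exact ⟨.par P' Q', rfl, .commRL hP hQ, not_or.2 ⟨hμ₂, hμ₁⟩⟩
    | parTick h₁ h₂ =>
      obtain ⟨P', rfl, hP, -⟩ := ihP h₁
      obtain ⟨Q', rfl, hQ, -⟩ := ihQ h₂
      exact ⟨.par P' Q', rfl, .parTick hP hQ, id⟩

theorem canTick_hide_iff {P : Sys} : CanTick (P.hide I O) ↔ CanTick P := by
  constructor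
  · rintro ⟨_, h⟩
    obtain ⟨P', -, hP, -⟩ := h.of_hide
    exact ⟨P', hP⟩
  · rintro ⟨P', h⟩
    exact ⟨_, h.hide id⟩

end SystemHiding

def IsTester (l : Role) (Q : Sys) : Prop := AllOP Q ∧ l ∉ rolesList Q

def CanOutTo (Q : Sys) (a : AName) (l : Role) : Prop := ∃ r Q', SStep Q (.out a r l) Q'

section Testers

variable {l : Role} {a : AName}

theorem IsTester.step {Q Q' : Sys} {μ : SLabel} (hQ : IsTester l Q) (hs : SStep Q μ Q') :
    IsTester l Q' :=
  ⟨hQ.1.step hs, hs.rolesList_eq ▸ hQ.2⟩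

theorem IsTester.of_par {P Q : Sys} (h : IsTester l (.par P Q)) : IsTester l P ∧ IsTester l Q :=
  ⟨⟨h.1.1, fun hP => h.2 (List.mem_append_left _ hP)⟩,
    ⟨h.1.2, fun hQ => h.2 (List.mem_append_right _ hQ)⟩⟩

theorem CanOutTo.not_tick {Q Q' : Sys} (hop : AllOP Q) (h : CanOutTo Q a l) :
    ¬ SStep Q .tick Q' := by
  intro ht
  induction Q generalizing Q' with
  | atom D r =>
    obtain ⟨_, _, hQ⟩ := h
    cases hQ with | atomOut hout =>
    cases ht with | atomTick htick =>
    exact (hop D (.refl D) a l ⟨_, hout⟩).1 ⟨_, htick⟩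
  | par Q₁ Q₂ ih₁ ih₂ =>
    obtain ⟨_, _, hQ⟩ := h
    cases ht with
    | parL _ hne | parR _ hne => exact hne rfl
    | parTick h₁ h₂ =>
      cases hQ with
      | parL hQ _ => exact ih₁ hop.1 ⟨_, _, hQ⟩ h₁
      | parR hQ _ => exact ih₂ hop.2 ⟨_, _, hQ⟩ h₂

theorem CanOutTo.atom_step {D : Orc} {r : Role} {Q' : Sys} {μ : SLabel}
    (hD : OutputPersistent D) (h : CanOutTo (.atom D r) a l) (hs : SStep (.atom D r) μ Q')
    (hout : ∀ r', μ ≠ .out a r' l) (htick : μ ≠ .tick) : CanOutTo Q' a l := by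
  obtain ⟨_, _, hQa⟩ := h
  cases hQa with | atomOut ho =>
  have hpersist := (hD D (.refl D) a l ⟨_, ho⟩).2
  cases hs with
  | atomTau hs | atomInp hs =>
    obtain ⟨_, hF⟩ := hpersist _ _ hs nofun
    exact ⟨r, _, .atomOut hF⟩
  | atomOut hs =>
    obtain ⟨_, hF⟩ := hpersist _ _ hs fun heq => by cases heq; exact hout r rfl
    exact ⟨r, _, .atomOut hF⟩
  | atomTick => exact absurd rfl htick

theorem CanOutTo.step {Q Q' : Sys} {μ : SLabel} (hQ : IsTester l Q) (h : CanOutTo Q a l)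
    (hs : SStep Q μ Q') (hout : ∀ r, μ ≠ .out a r l) (htick : μ ≠ .tick) :
    CanOutTo Q' a l := by
  induction Q generalizing μ Q' with
  | atom D r => exact h.atom_step hQ.1 hs hout htick
  | par Q₁ Q₂ ih₁ ih₂ =>
    obtain ⟨hQ₁, hQ₂⟩ := hQ.of_par
    obtain ⟨r, _, hQa⟩ := h
    cases hQa with
    | parL hQa _ =>
      cases hs with
      | parL hs _ =>
        obtain ⟨r', _, h'⟩ := ih₁ hQ₁ ⟨_, _, hQa⟩ hs hout htick
        exact ⟨r', _, .parL h' nofun⟩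
      | parR _ _ => exact ⟨r, _, .parL hQa nofun⟩
      | commLR hP hQ' =>
        obtain ⟨r', _, h'⟩ := ih₁ hQ₁ ⟨_, _, hQa⟩ hP
          (fun r' heq => by cases heq; exact hQ₂.2 hQ'.mem_rolesList_of_inp) nofun
        exact ⟨r', _, .parL h' nofun⟩
      | commRL hP _ =>
        obtain ⟨r', _, h'⟩ := ih₁ hQ₁ ⟨_, _, hQa⟩ hP nofun nofun
        exact ⟨r', _, .parL h' nofun⟩
      | parTick => exact absurd rfl htick
    | parR hQa _ =>
      cases hs with
      | parL _ _ => exact ⟨r, _, .parR hQa nofun⟩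
      | parR hs _ =>
        obtain ⟨r', _, h'⟩ := ih₂ hQ₂ ⟨_, _, hQa⟩ hs hout htick
        exact ⟨r', _, .parR h' nofun⟩
      | commLR _ hQ' =>
        obtain ⟨r', _, h'⟩ := ih₂ hQ₂ ⟨_, _, hQa⟩ hQ' nofun nofun
        exact ⟨r', _, .parR h' nofun⟩
      | commRL hP hQ' =>
        obtain ⟨r', _, h'⟩ := ih₂ hQ₂ ⟨_, _, hQa⟩ hQ'
          (fun r' heq => by cases heq; exact hQ₁.2 hP.mem_rolesList_of_inp) nofun
        exact ⟨r', _, .parR h' nofun⟩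
      | parTick => exact absurd rfl htick

theorem SStep.par_atom {E : Orc} {Q S : Sys} {μ : SLabel}
    (h : SStep (.par (.atom E l) Q) μ S) :
    ∃ E' Q', S = .par (.atom E' l) Q' ∧ inames E' ⊆ inames E ∧
      (IsTester l Q → IsTester l Q') := by
  have atom_inv : ∀ {μ X}, SStep (.atom E l) μ X → ∃ E' ν, X = .atom E' l ∧ OStep E ν E' := by
    intro μ X h
    cases h with
    | atomTau h | atomInp h | atomOut h | atomTick h => exact ⟨_, _, rfl, h⟩
  cases h with
  | parL h _ =>
    obtain ⟨E', ν, rfl, hE⟩ := atom_inv h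
    exact ⟨E', Q, rfl, hE.inames_subset, id⟩
  | parR h _ => exact ⟨E, _, rfl, subset_rfl, (·.step h)⟩
  | commLR h₁ h₂ | commRL h₁ h₂ | parTick h₁ h₂ =>
    obtain ⟨E', ν, rfl, hE⟩ := atom_inv h₁
    exact ⟨E', _, rfl, hE.inames_subset, (·.step h₂)⟩

theorem Reach.par_atom {E₀ : Orc} {Q₀ S : Sys} (hr : Reach (.par (.atom E₀ l) Q₀) S)
    (hQ₀ : IsTester l Q₀) :
    ∃ E Q, S = .par (.atom E l) Q ∧ inames E ⊆ inames E₀ ∧ IsTester l Q := by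
  refine hr.invariant (Inv := fun S =>
    ∃ E Q, S = .par (.atom E l) Q ∧ inames E ⊆ inames E₀ ∧ IsTester l Q) ?_
    ⟨E₀, Q₀, rfl, subset_rfl, hQ₀⟩
  rintro _ S' ⟨E, Q, rfl, hE, hQ⟩ hs
  obtain ⟨_, hs, -⟩ := hs.exists_sstep
  obtain ⟨E', Q', rfl, hE', hQ'⟩ := hs.par_atom
  exact ⟨E', Q', rfl, hE'.trans hE, hQ' hQ⟩

theorem CanOutTo.par_atom_step {E E' : Orc} {Q Q' : Sys} {μ : SLabel} (hQ : IsTester l Q)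
    (h : CanOutTo Q a l) (hs : SStep (.par (.atom E l) Q) μ (.par (.atom E' l) Q'))
    (htick : μ ≠ .tick) (hout : ∀ r, μ ≠ .out a r l) (hcomm : ∀ r, μ ≠ .comm a r l) :
    CanOutTo Q' a l := by
  cases hs with
  | parL _ _ => exact h
  | parR hs _ => exact h.step hQ hs hout htick
  | commLR hE hs =>
    cases hE
    exact h.step hQ hs nofun nofun
  | commRL _ hs =>
    refine h.step hQ hs (fun r heq => ?_) nofun
    cases heq
    exact hcomm _ rfl
  | parTick => exact absurd rfl htick

theorem SStep.comm_par_atom {E : Orc} {Q S : Sys} {r : Role}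
    (h : SStep (.par (.atom E l) Q) (.comm a r l) S) (hl : l ∉ rolesList Q) :
    CanOutTo Q a l ∧ ∃ E', OStep E (.inp a) E' := by
  cases h with
  | parL h _ => cases h
  | parR h _ => exact absurd h.mem_rolesList_of_comm hl
  | commLR _ h => exact absurd h.mem_rolesList_of_inp hl
  | commRL hE hQ =>
    cases hE with | atomInp hE =>
    exact ⟨⟨_, _, hQ⟩, _, hE⟩

end Testers

def NoCommTo (M : Finset AName) (l : Role) (S : Sys) : Prop :=
  ∀ a ∈ M, ∀ r S', ¬ SStep S (.comm a r l) S'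

def HidesCommTo (I : Role → AName → Prop) (O : Role → AName → Role → Prop)
    (M : Finset AName) (l : Role) : Prop :=
  ∀ a r s, SLabel.Hidden I O (.comm a r s) ↔ s = l ∧ a ∈ M

section HidingCommunications

variable {I : Role → AName → Prop} {O : Role → AName → Role → Prop} {M : Finset AName}
  {l : Role}

theorem CompleteStep.of_hide {S T : Sys} (h : CompleteStep (S.hide I O) T) :
    ∃ S', T = S'.hide I O ∧ CompleteStep S S' := by
  rcases h with h | ⟨_, _, _, h⟩ <;> obtain ⟨S', rfl, h, -⟩ := h.of_hide
  exacts [⟨S', rfl, .inl h⟩, ⟨S', rfl, .inr ⟨_, _, _, h⟩⟩]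

theorem Reach.of_hide {S T : Sys} (h : Reach (S.hide I O) T) :
    ∃ S', T = S'.hide I O ∧ Reach S S' := by
  generalize hS : S.hide I O = U at h
  induction h generalizing S with
  | refl => exact ⟨S, hS.symm, .refl S⟩
  | step hs _ ih =>
    subst hS
    obtain ⟨S₁, rfl, hs₁⟩ := hs.of_hide
    obtain ⟨S', rfl, hr⟩ := ih rfl
    exact ⟨S', rfl, .step hs₁ hr⟩

theorem CompleteStep.hide (hB : HidesCommTo I O M l)
    {S S' : Sys} (hS : NoCommTo M l S) (h : CompleteStep S S') :
    CompleteStep (S.hide I O) (S'.hide I O) := by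
  rcases h with h | ⟨a, r, s, h⟩
  · exact .inl (h.hide id)
  · refine .inr ⟨a, r, s, h.hide fun hh => ?_⟩
    obtain ⟨rfl, ha⟩ := (hB a r s).1 hh
    exact hS a ha r S' h

theorem Reach.hide (hB : HidesCommTo I O M l)
    {S S' : Sys} (h : ∀ S', Reach S S' → NoCommTo M l S') (hr : Reach S S') :
    Reach (S.hide I O) (S'.hide I O) := by
  induction hr with
  | refl => exact .refl _
  | step hs _ ih =>
    exact .step (hs.hide hB (h _ (.refl _))) (ih fun S'' hr => h S'' (.step hs hr))

theorem correct_hide_iff (hB : HidesCommTo I O M l)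
    {S : Sys} (h : ∀ S', Reach S S' → NoCommTo M l S') :
    Correct (S.hide I O) ↔ Correct S := by
  constructor
  · intro hc S' hr
    obtain ⟨T, hT, htick⟩ := hc _ (hr.hide hB h)
    obtain ⟨S'', rfl, hr'⟩ := Reach.of_hide hT
    exact ⟨S'', hr', canTick_hide_iff.1 htick⟩
  · intro hc T hT
    obtain ⟨S', rfl, hr⟩ := Reach.of_hide hT
    obtain ⟨S'', hr', htick⟩ := hc S' hr
    exact ⟨_, hr'.hide hB fun X hX => h X (hr.trans hX), canTick_hide_iff.2 htick⟩

theorem exists_reach_hide_not_noCommTo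
    (hB : HidesCommTo I O M l)
    {S S' : Sys} (hr : Reach S S') (h : ¬ NoCommTo M l S') :
    ∃ S₁, Reach S S₁ ∧ Reach (S.hide I O) (S₁.hide I O) ∧ ¬ NoCommTo M l S₁ := by
  induction hr with
  | refl => exact ⟨_, .refl _, .refl _, h⟩
  | @step S₀ _ _ hs _ ih =>
    by_cases hS₀ : NoCommTo M l S₀
    · obtain ⟨S₁, hr, hr', h₁⟩ := ih h
      exact ⟨S₁, .step hs hr, .step (hs.hide hB hS₀) hr', h₁⟩
    · exact ⟨S₀, .refl _, .refl _, hS₀⟩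

theorem not_correct_hide_of_canOutTo
    (hB : HidesCommTo I O M l)
    {E : Orc} {Q : Sys} {a : AName} (ha : a ∈ M) (hQ : IsTester l Q) (ho : CanOutTo Q a l) :
    ¬ Correct ((Sys.par (.atom E l) Q).hide I O) := by
  refine not_correct_of_invariant (Inv := fun T =>
    ∃ E Q, T = (Sys.par (.atom E l) Q).hide I O ∧ IsTester l Q ∧ CanOutTo Q a l)
    ?_ ?_ ⟨E, Q, rfl, hQ, ho⟩
  · rintro _ T' ⟨E, Q, rfl, hQ, ho⟩ hs
    obtain ⟨μ, hs, htick, hout⟩ := hs.exists_sstep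
    obtain ⟨S', rfl, hs, hμ⟩ := hs.of_hide
    obtain ⟨E', Q', rfl, -, hQ'⟩ := hs.par_atom
    refine ⟨E', Q', rfl, hQ' hQ, ho.par_atom_step hQ hs htick (hout a · l) ?_⟩
    rintro r rfl
    exact hμ ((hB a r l).2 ⟨rfl, ha⟩)
  · rintro _ ⟨E, Q, rfl, hQ, ho⟩ htick
    obtain ⟨_, htick⟩ := canTick_hide_iff.1 htick
    cases htick with
    | parL _ hne | parR _ hne => exact hne rfl
    | parTick _ htick => exact ho.not_tick hQ.1 htick

theorem noCommTo_of_correct_hide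
    (hB : HidesCommTo I O M l)
    {E : Orc} {P : Sys} (hP : IsTester l P) (hc : Correct ((Sys.par (.atom E l) P).hide I O))
    {S : Sys} (hr : Reach (.par (.atom E l) P) S) : NoCommTo M l S := by
  by_contra hS
  obtain ⟨S₁, hr₁, hr₁', hS₁⟩ := exists_reach_hide_not_noCommTo hB hr hS
  obtain ⟨E₁, Q₁, rfl, -, hQ₁⟩ := hr₁.par_atom hP
  simp only [NoCommTo, not_forall, not_not] at hS₁
  obtain ⟨a, ha, r, _, hs⟩ := hS₁
  exact not_correct_hide_of_canOutTo hB ha hQ₁ (hs.comm_par_atom hQ₁.2).1 (hc.reach hr₁')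

end HidingCommunications

noncomputable def Sys.hideInputs (P : Sys) (M : Finset AName) (l : Role) : Sys :=
  P.hide (fun r a => r = l ∧ a ∈ M) (fun _ _ _ => False)

noncomputable def Sys.hideOutputs (P : Sys) (M : Finset AName) (l : Role) : Sys :=
  P.hide (fun _ _ => False) (fun _ a s => s = l ∧ a ∈ M)

section Restriction

variable {C : Orc} {M : Finset AName} {l : Role} {P : Sys}

theorem hidesCommTo_inputs :
    HidesCommTo (fun r a => r = l ∧ a ∈ M) (fun _ _ _ => False) M l :=
  fun _ _ _ => or_iff_right id

theorem hidesCommTo_outputs :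
    HidesCommTo (fun _ _ => False) (fun _ a s => s = l ∧ a ∈ M) M l :=
  fun _ _ _ => or_iff_left id

theorem hideInputs_par_atom (hl : l ∉ rolesList P) :
    (Sys.par (.atom C l) P).hideInputs M l = .par (.atom (restrict C M) l) P := by
  rw [Sys.hideInputs, Sys.hide, Sys.hide,
    Sys.hide_eq_self fun r hr a (ha : r = l ∧ a ∈ M) => hl (ha.1 ▸ hr), restrict_eq_hide]
  simp only [true_and]

theorem hideOutputs_par_atom (hC : l ∉ oroles C) :
    (Sys.par (.atom C l) P).hideOutputs M l = .par (.atom C l) (P.hideOutputs M l) := by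
  rw [Sys.hideOutputs, Sys.hideOutputs, Sys.hide, Sys.hide,
    Orc.hide_eq_self (fun _ => id) fun _ s hs (h : s = l ∧ _) => hC (h.1 ▸ hs)]

theorem correct_of_correct_restrict (hP : IsTester l P)
    (h : Correct (.par (.atom (restrict C M) l) P)) : Correct (.par (.atom C l) P) := by
  rw [← hideInputs_par_atom hP.2] at h
  exact (correct_hide_iff hidesCommTo_inputs
    fun _ => noCommTo_of_correct_hide hidesCommTo_inputs hP h).1 h

theorem correct_restrict_of_noCommTo (hl : l ∉ rolesList P)
    (h : ∀ S, Reach (.par (.atom C l) P) S → NoCommTo M l S)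
    (hc : Correct (.par (.atom C l) P)) : Correct (.par (.atom (restrict C M) l) P) := by
  rw [← hideInputs_par_atom hl]
  exact (correct_hide_iff hidesCommTo_inputs h).2 hc

theorem correct_hideOutputs (hP : IsTester l P) (hC : l ∉ oroles C)
    (hM : ∀ a ∈ M, a ∉ inames C) (hc : Correct (.par (.atom C l) P)) :
    Correct (.par (.atom C l) (P.hideOutputs M l)) := by
  rw [← hideOutputs_par_atom hC]
  refine (correct_hide_iff hidesCommTo_outputs fun S hr a ha r S' hs => ?_).2 hc
  obtain ⟨E, Q, rfl, hE, hQ⟩ := hr.par_atom hP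
  obtain ⟨-, _, hinp⟩ := hs.comm_par_atom hQ.2
  exact hM a ha (hE hinp.inp_mem_inames)

theorem noCommTo_of_correct_hideOutputs (hP : IsTester l P) (hC : l ∉ oroles C)
    (hc : Correct (.par (.atom C l) (P.hideOutputs M l))) :
    ∀ S, Reach (.par (.atom C l) P) S → NoCommTo M l S := by
  rw [← hideOutputs_par_atom hC] at hc
  exact fun _ => noCommTo_of_correct_hide hidesCommTo_outputs hP hc

end Restriction

theorem restrict_subcontract_iff_general (C C' : Orc) :
    Subcontract (restrict C' (inames C' \ inames C)) C ↔ Subcontract C' C := by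
  rw [Subcontract, Subcontract, oroles_restrict]
  constructor
  · intro hres l hl P hop hwf hlP hc
    exact correct_of_correct_restrict ⟨hop, hlP⟩ (hres l hl P hop hwf hlP hc)
  · intro hsub l hl P hop hwf hlP hc
    obtain ⟨hlC, hlC'⟩ := Finset.notMem_union.1 hl
    have hc' : Correct (.par (.atom C' l) (P.hideOutputs (inames C' \ inames C) l)) :=
      hsub l hl _ hop.hide hwf.hide (by rwa [Sys.hideOutputs, rolesList_hide])
        (correct_hideOutputs ⟨hop, hlP⟩ hlC (fun a ha => (Finset.mem_sdiff.1 ha).2) hc)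
    exact correct_restrict_of_noCommTo hlP
      (noCommTo_of_correct_hideOutputs ⟨hop, hlP⟩ hlC' hc') (hsub l hl P hop hwf hlP hc)

/-- For all output persistent contracts `C` and `C'`:
`C' \\ (I(C') − I(C)) ⪯ C` if and only if `C' ⪯ C`. -/
theorem restrict_subcontract_iff (C C' : Orc)
    (hC : OutputPersistent C) (hC' : OutputPersistent C') :
    Subcontract (restrict C' (inames C' \ inames C)) C ↔ Subcontract C' C :=
  restrict_subcontract_iff_general C C'
end
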